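/- arXiv:2411.14188 — 7 statements merged into one kernel-verified Lean document; each statement's English description precedes it below -/
import Mathlib

section
/- Let p be a prime with p ≡ 3 (mod 4) and let a be an integer that is a quadratic non-residue modulo p (in particular p ∤ a). Then the number of points of the elliptic curve E_p : y² = x³ + ax over the field 𝔽_p, counting the point at infinity, is exactly p + 1; equivalently, the number of affine solutions (x, y) ∈ 𝔽_p × 𝔽_p of y² = x³ + ax is exactly p. -/
/-- Let `p` be a prime with `p ≡ 3 (mod 4)` and let `a` be an integer that is a quadratic
non-residue modulo `p`. Then the number of affine solutions `(x, y) ∈ 𝔽_p × 𝔽_p` of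
`y² = x³ + ax` is exactly `p` (so with the point at infinity the curve has `p + 1` points). -/
theorem card_points_cubic_plus_ax (p : ℕ) (hp : p.Prime) (hp3 : p % 4 = 3) (a : ℤ)
    (ha : ¬ IsSquare (a : ZMod p)) :
    Nat.card {P : ZMod p × ZMod p // P.2 ^ 2 = P.1 ^ 3 + (a : ZMod p) * P.1} = p := by
  haveI : Fact p.Prime := ⟨hp⟩
  have hp2 : ringChar (ZMod p) ≠ 2 := by
    rw [ZMod.ringChar_zmod_n]; omega
  set F := ZMod p
  set f : F → F := fun x => x ^ 3 + (a : F) * x with hf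
  -- equivalence with sigma type
  have e : {P : F × F // P.2 ^ 2 = P.1 ^ 3 + (a : F) * P.1} ≃
      Σ x : F, {y : F // y ^ 2 = f x} :=
    { toFun := fun P => ⟨P.1.1, P.1.2, P.2⟩
      invFun := fun s => ⟨(s.1, s.2.1), s.2.2⟩
      left_inv := fun P => rfl
      right_inv := fun s => rfl }
  have hcard : Nat.card {P : F × F // P.2 ^ 2 = P.1 ^ 3 + (a : F) * P.1}
      = ∑ x : F, ({y : F | y ^ 2 = f x}.toFinset.card) := by
    rw [Nat.card_eq_fintype_card, Fintype.card_congr e, Fintype.card_sigma]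
    congr 1
    ext x
    rw [Set.toFinset_card]
    exact Fintype.card_congr (Equiv.setCongr rfl)
  have hχneg : quadraticChar F (-1) = -1 := by
    rw [quadraticChar_neg_one hp2, ZMod.card, ZMod.χ₄_nat_three_mod_four hp3]
  have hsum : ∑ x : F, quadraticChar F (f x) = 0 := by
    have h2 : ∑ x : F, quadraticChar F (f x)
        = ∑ x : F, quadraticChar F (f (-x)) :=
      (Fintype.sum_equiv (Equiv.neg F) _ _ (fun x => rfl)).symm
    have h3 : ∀ x : F, quadraticChar F (f (-x)) = - quadraticChar F (f x) := by
      intro x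
      have hx : f (-x) = (-1) * f x := by simp only [hf]; ring
      rw [hx, map_mul, hχneg, neg_one_mul]
    have h4 : ∑ x : F, quadraticChar F (f (-x)) = -∑ x : F, quadraticChar F (f x) := by
      simp only [h3, Finset.sum_neg_distrib]
    linarith [h2.trans h4]
  have key : (∑ x : F, (({y : F | y ^ 2 = f x}.toFinset.card : ℤ))) = p := by
    have : ∀ x : F, (({y : F | y ^ 2 = f x}.toFinset.card : ℤ))
        = quadraticChar F (f x) + 1 := fun x => quadraticChar_card_sqrts hp2 (f x)
    simp only [this, Finset.sum_add_distrib, hsum, zero_add, Finset.sum_const,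
      Finset.card_univ, smul_eq_mul, mul_one]
    simp [F, ZMod.card]
  rw [hcard]
  exact_mod_cast key
end

section
/- Let a : ℕ → ℤ be a sequence with a(1) = 1 that is multiplicative on coprime arguments (a(mn) = a(m)·a(n) whenever gcd(m, n) = 1), and suppose that for every prime p with p ≡ 3 (mod 4) one has a(p) = 0 and the Hecke recurrence a(p)·a(p^k) = a(p^{k+1}) + p·a(p^{k−1}) holds for all k ≥ 1. Then a(w) = 0 for every positive integer w with w ≡ 3 (mod 4). -/
/-!
Since `a p = 0`, the Hecke recurrence at an even exponent reads `a (p ^ (k + 1)) = -p * a (p ^ (k - 1))`,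
so `a` vanishes on odd powers of every prime `p ≡ 3 (mod 4)`. A prime power is `≡ 3 (mod 4)` only if it
is such an odd power, and a product `m * n ≡ 3 (mod 4)` forces `m ≡ 3` or `n ≡ 3 (mod 4)`; induction
over coprime factorisations then gives the claim.
-/

theorem Nat.mod_four_eq_three_of_mul_mod_four_eq_three {m n : ℕ} (h : m * n % 4 = 3) :
    m % 4 = 3 ∨ n % 4 = 3 := by
  rw [Nat.mul_mod] at h
  have := m.mod_lt four_pos
  have := n.mod_lt four_pos
  interval_cases m % 4 <;> interval_cases n % 4 <;> simp_all

theorem Nat.pow_mod_four_eq_three {p k : ℕ} (h : p ^ k % 4 = 3) : p % 4 = 3 ∧ Odd k := by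
  have hk : Odd k := by
    by_contra hk
    obtain ⟨j, rfl⟩ := Nat.not_odd_iff_even.mp hk
    rw [← two_mul, pow_mul', Nat.pow_mod] at h
    have := (p ^ j).mod_lt four_pos
    interval_cases p ^ j % 4 <;> simp at h
  refine ⟨?_, hk⟩
  have hp2 : ¬ 2 ∣ p := fun h2 => by
    have := Nat.dvd_trans h2 (dvd_pow_self p hk.pos.ne')
    omega
  have hp1 : p % 4 ≠ 1 := fun hp1 => by
    rw [Nat.pow_mod, hp1, one_pow] at h
    simp at h
  omega

theorem apply_pow_odd_eq_zero_of_hecke {R : Type*} [CommRing R] {a : ℕ → R} {p : ℕ}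
    (hp : a p = 0)
    (hrec : ∀ k, 1 ≤ k → a p * a (p ^ k) = a (p ^ (k + 1)) + p * a (p ^ (k - 1))) (j : ℕ) :
    a (p ^ (2 * j + 1)) = 0 := by
  induction j with
  | zero => simpa using hp
  | succ j ih =>
    have h := hrec (2 * j + 2) (by omega)
    rw [show 2 * j + 2 - 1 = 2 * j + 1 by omega, hp, ih, zero_mul, mul_zero, add_zero] at h
    exact h.symm

theorem lseries_coeff_three_mod_four_general (a : ℕ → ℤ)
    (hmul : ∀ m n : ℕ, Nat.Coprime m n → a (m * n) = a m * a n)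
    (hprime : ∀ p : ℕ, p.Prime → p % 4 = 3 →
      a p = 0 ∧ ∀ k : ℕ, 1 ≤ k → a p * a (p ^ k) = a (p ^ (k + 1)) + (p : ℤ) * a (p ^ (k - 1))) :
    ∀ w : ℕ, 0 < w → w % 4 = 3 → a w = 0 := by
  rintro w -
  induction w using Nat.recOnPosPrimePosCoprime with
  | prime_pow p k hp _ =>
    intro hpk
    obtain ⟨hp4, j, rfl⟩ := Nat.pow_mod_four_eq_three hpk
    obtain ⟨hap, hrec⟩ := hprime p hp hp4
    exact apply_pow_odd_eq_zero_of_hecke hap hrec j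
  | zero => simp
  | one => simp
  | coprime m n _ _ hmn ihm ihn =>
    intro hmn4
    rw [hmul m n hmn]
    rcases Nat.mod_four_eq_three_of_mul_mod_four_eq_three hmn4 with hm | hn
    · rw [ihm hm, zero_mul]
    · rw [ihn hn, mul_zero]

/-- Let `a : ℕ → ℤ` be multiplicative on coprime arguments with `a 1 = 1`, and suppose that for
every prime `p ≡ 3 (mod 4)` one has `a p = 0` and the Hecke recurrence
`a p * a (p^k) = a (p^(k+1)) + p * a (p^(k-1))` for all `k ≥ 1`. Then `a w = 0` for every
positive integer `w ≡ 3 (mod 4)`. -/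
theorem lseries_coeff_three_mod_four (a : ℕ → ℤ) (h1 : a 1 = 1)
    (hmul : ∀ m n : ℕ, Nat.Coprime m n → a (m * n) = a m * a n)
    (hprime : ∀ p : ℕ, p.Prime → p % 4 = 3 →
      a p = 0 ∧ ∀ k : ℕ, 1 ≤ k → a p * a (p ^ k) = a (p ^ (k + 1)) + (p : ℤ) * a (p ^ (k - 1))) :
    ∀ w : ℕ, 0 < w → w % 4 = 3 → a w = 0 :=
  lseries_coeff_three_mod_four_general a hmul hprime
end

section
/- Let n be a squarefree positive integer. The torsion subgroup of the group E_n(ℚ) of rational points of the elliptic curve E_n : y² = x³ − n²x consists exactly of the four points O (the point at infinity), (0, 0), (n, 0), and (−n, 0), and is isomorphic to ℤ/2ℤ ⊕ ℤ/2ℤ. -/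
/-!
For `P = (x, y)` with `y ≠ 0` and a root `e` of `f = X³ - n²X`, the duplication formula gives
`x(2P) - e = (((x - e)² - f'(e)) / 2y)²`, and `f'(e) = 3e² - n² ∈ {-n², 2n²}` is not a rational
square. Hence no point has order `4`: `2P = (e, 0)` would force `(x - e)² = f'(e)`.

No point has odd order either. Each nonzero multiple `P` of such a point is a double, so `x(P)`,
`x(P) - n` and `x(P) + n` are squares; modulo `4` this is impossible for `2`-adic integers when
`4 ∤ n`, so `‖x(P)‖₂ > 1`, and then the duplication formula gives `‖x(2P)‖₂ = 4‖x(P)‖₂`: the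
`2`-adic size of `x` would grow strictly along the finitely many multiples.

So the torsion is killed by `2`: it is `O` together with the three points `(e, 0)`.
-/

/-- The elliptic curve `E_n : y² = x³ − n²x` as an affine Weierstrass curve over `ℚ`. -/
def congruentCurve (n : ℕ) : WeierstrassCurve.Affine ℚ :=
  { a₁ := 0, a₂ := 0, a₃ := 0, a₄ := -(n : ℚ) ^ 2, a₆ := 0 }

theorem ZMod.eq_zero_of_isSquare_sub_add {a m : ZMod 4} (h : IsSquare a)
    (hsub : IsSquare (a - m)) (hadd : IsSquare (a + m)) : m = 0 := by
  revert a m; decide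

theorem PadicInt.isSquare_of_isSquare_coe {p : ℕ} [Fact p.Prime] {x : ℤ_[p]}
    (h : IsSquare (x : ℚ_[p])) : IsSquare x := by
  obtain ⟨r, hr⟩ := h
  have hr1 : ‖r‖ ≤ 1 := by
    have : ‖r‖ * ‖r‖ ≤ 1 := by rw [← norm_mul, ← hr]; exact x.norm_le_one
    nlinarith [norm_nonneg r]
  exact ⟨⟨r, hr1⟩, Subtype.ext hr⟩

theorem PadicInt.four_dvd_of_isSquare_sub_add {n : ℕ} {x : ℤ_[2]} (h : IsSquare x)
    (hsub : IsSquare (x - n)) (hadd : IsSquare (x + n)) : 4 ∣ n := by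
  have hn : ((n : ℕ) : ZMod (2 ^ 2)) = 0 := by
    simpa using ZMod.eq_zero_of_isSquare_sub_add (h.map (toZModPow 2))
      (by simpa using hsub.map (toZModPow 2)) (by simpa using hadd.map (toZModPow 2))
  exact (ZMod.natCast_eq_zero_iff n (2 ^ 2)).mp hn

theorem Padic.one_lt_norm_of_isSquare_sub_add {n : ℕ} (hn : ¬ 4 ∣ n) {X : ℚ_[2]}
    (h : IsSquare X) (hsub : IsSquare (X - n)) (hadd : IsSquare (X + n)) : 1 < ‖X‖ := by
  by_contra! hX
  let x : ℤ_[2] := ⟨X, hX⟩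
  exact hn <| PadicInt.four_dvd_of_isSquare_sub_add (PadicInt.isSquare_of_isSquare_coe (x := x) h)
    (PadicInt.isSquare_of_isSquare_coe (x := x - (n : ℤ_[2])) (by push_cast; exact hsub))
    (PadicInt.isSquare_of_isSquare_coe (x := x + (n : ℤ_[2])) (by push_cast; exact hadd))

section AddCommGroup

variable {G : Type*} [AddCommGroup G]

theorem eq_zero_of_odd_nsmul_of_two_nsmul {r : ℕ} (hr : Odd r) {P : G} (hr0 : r • P = 0)
    (h2 : 2 • P = 0) : P = 0 := by
  obtain ⟨k, rfl⟩ := hr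
  rwa [add_nsmul, mul_nsmul, h2, nsmul_zero, zero_add, one_nsmul] at hr0

theorem exists_two_nsmul_eq_of_odd_nsmul {r : ℕ} (hr : Odd r) {P : G} (hP : r • P = 0) :
    ∃ R, 2 • R = P := by
  obtain ⟨k, rfl⟩ := hr
  refine ⟨(k + 1) • P, ?_⟩
  rw [← mul_nsmul', show 2 * (k + 1) = 2 * k + 1 + 1 by ring, add_nsmul, hP, zero_add, one_nsmul]

theorem two_nsmul_eq_zero_of_isOfFinAddOrder
    (hodd : ∀ (r : ℕ) (P : G), Odd r → r • P = 0 → P = 0)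
    (hfour : ∀ P : G, 4 • P = 0 → 2 • P = 0) {P : G} (hP : IsOfFinAddOrder P) : 2 • P = 0 := by
  obtain ⟨k, r, hr, hkr⟩ := Nat.exists_eq_two_pow_mul_odd hP.addOrderOf_pos.ne'
  have hk : 2 ^ (k + 1) • P = 0 := by
    rw [pow_succ, mul_nsmul, hodd r (2 ^ k • P) hr, nsmul_zero]
    rw [← mul_nsmul, ← hkr, addOrderOf_nsmul_eq_zero]
  clear hkr
  induction k with
  | zero => simpa using hk
  | succ k ih =>
    refine ih ?_
    rw [pow_succ, mul_nsmul, hfour]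
    rwa [← mul_nsmul, show 2 ^ k * 4 = 2 ^ (k + 1 + 1) by ring]

theorem eq_zero_of_forall_lt_two_nsmul {α : Type*} [LinearOrder α] (f : G → α) {Q : G}
    (hQ : IsOfFinAddOrder Q)
    (hdesc : ∀ P ∈ AddSubgroup.zmultiples Q, P ≠ 0 → 2 • P ≠ 0 ∧ f P < f (2 • P)) : Q = 0 := by
  by_contra hQ0
  set S := {P | P ∈ AddSubgroup.zmultiples Q ∧ P ≠ 0}
  have hS : S.Finite := hQ.finite_zmultiples.subset fun P hP => hP.1
  obtain ⟨P, ⟨hPQ, hP0⟩, hmax⟩ :=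
    S.exists_max_image f hS ⟨Q, AddSubgroup.mem_zmultiples Q, hQ0⟩
  obtain ⟨h2P, hlt⟩ := hdesc P hPQ hP0
  exact (hmax _ ⟨AddSubgroup.nsmul_mem _ hPQ 2, h2P⟩).not_gt hlt

end AddCommGroup

open WeierstrassCurve WeierstrassCurve.Affine

def WeierstrassCurve.Affine.Point.xCoord {F : Type*} [Field F] {W : WeierstrassCurve.Affine F} :
    W.Point → F
  | .zero => 0
  | .some x _ _ => x

namespace congruentCurve

variable {n : ℕ}

lemma equation_iff {x y : ℚ} : (congruentCurve n).Equation x y ↔ y ^ 2 = x ^ 3 - n ^ 2 * x := by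
  rw [Affine.equation_iff]
  simp only [congruentCurve]
  constructor <;> intro h <;> linarith

lemma equation_zero_iff {x : ℚ} : (congruentCurve n).Equation x 0 ↔ x = 0 ∨ x = n ∨ x = -n := by
  rw [equation_iff]
  constructor
  · intro h
    have : x * (x - n) * (x + n) = 0 := by linear_combination -h
    simpa [sub_eq_zero, add_eq_zero_iff_eq_neg, or_assoc] using this
  · rintro (rfl | rfl | rfl) <;> ring

lemma nonsingular_of_equation (hn : n ≠ 0) {x y : ℚ} (h : (congruentCurve n).Equation x y) :
    (congruentCurve n).Nonsingular x y := by
  refine ((congruentCurve n).equation_iff_nonsingular_of_Δ_ne_zero ?_).mp h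
  have hΔ : (congruentCurve n).Δ = 64 * (n : ℚ) ^ 6 := by
    simp only [congruentCurve, Δ, b₂, b₄, b₆, b₈]
    ring
  rw [hΔ]
  have : (n : ℚ) ≠ 0 := Nat.cast_ne_zero.mpr hn
  positivity

lemma negY_eq (x y : ℚ) : (congruentCurve n).negY x y = -y := by
  simp [congruentCurve, negY]

lemma some_add_self_eq_zero_iff {x y : ℚ} (h : (congruentCurve n).Nonsingular x y) :
    Point.some x y h + Point.some x y h = 0 ↔ y = 0 := by
  constructor
  · intro h0
    by_contra hy
    rw [Point.add_self_of_Y_ne (by rw [negY_eq]; contrapose! hy; linarith)] at h0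
    exact Point.some_ne_zero _ h0
  · intro hy
    exact Point.add_self_of_Y_eq (by rw [negY_eq, hy, neg_zero])

lemma two_nsmul_eq_zero_iff (P : (congruentCurve n).Point) :
    2 • P = 0 ↔ P = 0 ∨ ∃ (x : ℚ) (h : (congruentCurve n).Nonsingular x 0),
      P = Point.some _ _ h ∧ (x = 0 ∨ x = n ∨ x = -(n : ℚ)) := by
  rw [two_nsmul]
  constructor
  · intro hP
    cases P with
    | zero => exact Or.inl rfl
    | @some x y h =>
      obtain rfl := (some_add_self_eq_zero_iff h).mp hP
      exact Or.inr ⟨x, h, rfl, equation_zero_iff.mp h.1⟩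
  · rintro (rfl | ⟨x, h, rfl, -⟩)
    · exact add_zero 0
    · exact (some_add_self_eq_zero_iff h).mpr rfl

lemma xCoord_two_nsmul_sub {x y e : ℚ} (h : (congruentCurve n).Nonsingular x y) (hy : y ≠ 0)
    (he : (congruentCurve n).Equation e 0) :
    (2 • Point.some x y h).xCoord - e = (((x - e) ^ 2 - (3 * e ^ 2 - n ^ 2)) / (2 * y)) ^ 2 := by
  have hy' : y ≠ (congruentCurve n).negY x y := by rw [negY_eq]; contrapose! hy; linarith
  rw [two_nsmul, Point.add_self_of_Y_ne hy']
  simp only [Point.xCoord, addX, slope_of_Y_ne rfl hy', negY_eq]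
  have hE := equation_iff.mp h.1
  have hroot := equation_iff.mp he
  simp only [congruentCurve]
  field_simp
  linear_combination (-16 * (2 * x + e)) * hE + (16 * (2 * x + e)) * hroot

lemma Y_ne_zero_of_two_nsmul_ne_zero {x y : ℚ} {h : (congruentCurve n).Nonsingular x y}
    (hP : 2 • Point.some x y h ≠ 0) : y ≠ 0 :=
  fun hy => hP (by rw [two_nsmul]; exact (some_add_self_eq_zero_iff h).mpr hy)

lemma xCoord_two_nsmul {x y : ℚ} (h : (congruentCurve n).Nonsingular x y) (hy : y ≠ 0) :
    (2 • Point.some x y h).xCoord = ((x ^ 2 + n ^ 2) / (2 * y)) ^ 2 := by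
  simpa using xCoord_two_nsmul_sub h hy (equation_zero_iff.mpr (Or.inl rfl))

lemma norm_xCoord_two_nsmul {P : (congruentCurve n).Point} (hP : 2 • P ≠ 0)
    (hx : 1 < ‖(P.xCoord : ℚ_[2])‖) :
    ‖((2 • P).xCoord : ℚ_[2])‖ = 4 * ‖(P.xCoord : ℚ_[2])‖ := by
  cases P with
  | zero => exact absurd (nsmul_zero 2) hP
  | @some x y h =>
  have hy := Y_ne_zero_of_two_nsmul_ne_zero hP
  have hE := congrArg (Rat.cast : ℚ → ℚ_[2]) (equation_iff.mp h.1)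
  rw [xCoord_two_nsmul h hy]
  simp only [Point.xCoord] at hx ⊢
  push_cast at hE ⊢
  set X : ℚ_[2] := (x : ℚ_[2])
  have hN : ‖(n : ℚ_[2])‖ ^ 2 ≤ 1 :=
    pow_le_one₀ (norm_nonneg _) (IsUltrametricDist.norm_natCast_le_one _ n)
  have hnum : ‖X ^ 2 + (n : ℚ_[2]) ^ 2‖ = ‖X‖ ^ 2 := by
    have : ‖(n : ℚ_[2]) ^ 2‖ < ‖X ^ 2‖ := by
      rw [norm_pow, norm_pow]; nlinarith
    rw [Padic.add_eq_max_of_ne this.ne', max_eq_left this.le, norm_pow]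
  have hden : ‖(y : ℚ_[2])‖ ^ 2 = ‖X‖ ^ 3 := by
    have : ‖-((n : ℚ_[2]) ^ 2 * X)‖ < ‖X ^ 3‖ := by
      rw [norm_neg, norm_mul, norm_pow, norm_pow]; nlinarith
    rw [← norm_pow, hE, sub_eq_add_neg, Padic.add_eq_max_of_ne this.ne', max_eq_left this.le,
      norm_pow]
  have h2 : ‖(2 : ℚ_[2])‖ = 2⁻¹ := by simpa using Padic.norm_p (p := 2)
  rw [norm_pow, norm_div, norm_mul, h2, hnum, div_pow, mul_pow, hden]
  field_simp
  ring

lemma one_lt_norm_xCoord_two_nsmul (hn : ¬ 4 ∣ n) {R : (congruentCurve n).Point}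
    (hR : 2 • R ≠ 0) : 1 < ‖((2 • R).xCoord : ℚ_[2])‖ := by
  cases R with
  | zero => exact absurd (nsmul_zero 2) hR
  | @some x y h =>
  have hy := Y_ne_zero_of_two_nsmul_ne_zero hR
  have hsq (e : ℚ) (he : (congruentCurve n).Equation e 0) :
      IsSquare (((2 • Point.some x y h).xCoord : ℚ_[2]) - e) := by
    rw [← Rat.cast_sub, xCoord_two_nsmul_sub h hy he]
    exact (IsSquare.sq _).map (Rat.castHom ℚ_[2])
  refine Padic.one_lt_norm_of_isSquare_sub_add hn ?_ ?_ ?_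
  · simpa using hsq 0 (equation_zero_iff.mpr (Or.inl rfl))
  · simpa using hsq n (equation_zero_iff.mpr (Or.inr (Or.inl rfl)))
  · simpa using hsq (-n) (equation_zero_iff.mpr (Or.inr (Or.inr rfl)))

lemma not_isSquare_three_mul_sq_sub_sq (hn : n ≠ 0) {e : ℚ} (he : (congruentCurve n).Equation e 0) :
    ¬ IsSquare (3 * e ^ 2 - n ^ 2) := by
  have hn' : (n : ℚ) ≠ 0 := Nat.cast_ne_zero.mpr hn
  rintro ⟨t, ht⟩
  rcases equation_zero_iff.mp he with rfl | rfl | rfl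
  · nlinarith [sq_pos_of_ne_zero hn', mul_self_nonneg t]
  all_goals
    refine Nat.prime_two.not_isSquare (Rat.isSquare_natCast_iff.mp ⟨t / n, ?_⟩)
    field_simp
    linear_combination ht

lemma two_nsmul_eq_zero_of_four_nsmul_eq_zero (hn : n ≠ 0) {P : (congruentCurve n).Point}
    (hP : 4 • P = 0) : 2 • P = 0 := by
  by_contra h2P
  obtain ⟨e, he, hPe⟩ : ∃ e, (congruentCurve n).Equation e 0 ∧ (2 • P).xCoord = e := by
    have : 2 • (2 • P) = 0 := by rw [← mul_nsmul', hP]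
    rcases (two_nsmul_eq_zero_iff _).mp this with h0 | ⟨e, he, hPe, -⟩
    · exact absurd h0 h2P
    · exact ⟨e, he.1, by rw [hPe]; rfl⟩
  cases P with
  | zero => exact h2P (nsmul_zero 2)
  | @some x y h =>
  have hy := Y_ne_zero_of_two_nsmul_ne_zero h2P
  have hsq := xCoord_two_nsmul_sub h hy he
  rw [hPe, sub_self, eq_comm, pow_eq_zero_iff two_ne_zero, div_eq_zero_iff, sub_eq_zero] at hsq
  exact not_isSquare_three_mul_sq_sub_sq hn he
    ⟨x - e, by rw [← hsq.resolve_right (by positivity), sq]⟩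

lemma eq_zero_of_odd_nsmul_eq_zero (hn : ¬ 4 ∣ n) {r : ℕ} (hr : Odd r)
    {Q : (congruentCurve n).Point} (hQ : r • Q = 0) : Q = 0 := by
  refine eq_zero_of_forall_lt_two_nsmul (fun P => ‖(P.xCoord : ℚ_[2])‖)
    (isOfFinAddOrder_iff_nsmul_eq_zero.mpr ⟨r, hr.pos, hQ⟩) fun P hPQ hP0 => ?_
  have hrP : r • P = 0 := by
    obtain ⟨k, rfl⟩ := AddSubgroup.mem_zmultiples_iff.mp hPQ
    rw [smul_comm, hQ, zsmul_zero]
  have h2P : 2 • P ≠ 0 := fun h => hP0 (eq_zero_of_odd_nsmul_of_two_nsmul hr hrP h)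
  obtain ⟨R, rfl⟩ := exists_two_nsmul_eq_of_odd_nsmul hr hrP
  refine ⟨h2P, ?_⟩
  have hR := one_lt_norm_xCoord_two_nsmul hn hP0
  rw [norm_xCoord_two_nsmul h2P hR]
  linarith

lemma mem_torsion_iff_two_nsmul_eq_zero (hn : ¬ 4 ∣ n) (P : (congruentCurve n).Point) :
    P ∈ AddCommGroup.torsion (congruentCurve n).Point ↔ 2 • P = 0 := by
  have hn0 : n ≠ 0 := by rintro rfl; exact hn (dvd_zero 4)
  rw [AddCommGroup.mem_torsion]
  refine ⟨two_nsmul_eq_zero_of_isOfFinAddOrder ?_ ?_, fun h =>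
    isOfFinAddOrder_iff_nsmul_eq_zero.mpr ⟨2, two_pos, h⟩⟩
  · exact fun _ _ hr hQ => eq_zero_of_odd_nsmul_eq_zero hn hr hQ
  · exact fun _ => two_nsmul_eq_zero_of_four_nsmul_eq_zero hn0

lemma isAddKleinFour_torsion (hn : ¬ 4 ∣ n) :
    IsAddKleinFour (AddCommGroup.torsion (congruentCurve n).Point) := by
  have hn0 : n ≠ 0 := by rintro rfl; exact hn (dvd_zero 4)
  have hns (e : ℚ) (he : e = 0 ∨ e = n ∨ e = -n) : (congruentCurve n).Nonsingular e 0 :=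
    nonsingular_of_equation hn0 (equation_zero_iff.mpr he)
  have hT : (AddCommGroup.torsion (congruentCurve n).Point : Set (congruentCurve n).Point) =
      {0, .some 0 0 (hns 0 (by simp)), .some n 0 (hns n (by simp)),
        .some (-n) 0 (hns (-n) (by simp))} := by
    ext P
    simp only [SetLike.mem_coe, mem_torsion_iff_two_nsmul_eq_zero hn, two_nsmul_eq_zero_iff,
      Set.mem_insert_iff, Set.mem_singleton_iff]
    constructor
    · rintro (rfl | ⟨x, h, rfl, rfl | rfl | rfl⟩) <;> simp
    · rintro (rfl | rfl | rfl | rfl)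
      · exact Or.inl rfl
      all_goals exact Or.inr ⟨_, _, rfl, by simp⟩
  have hcard : Nat.card (AddCommGroup.torsion (congruentCurve n).Point) = 4 := by
    rw [← SetLike.coe_sort_coe, Nat.card_coe_set_eq, hT]
    rw [Set.ncard_insert_of_notMem, Set.ncard_insert_of_notMem, Set.ncard_pair] <;>
      simp [hn0, eq_comm (a := (0 : ℚ))]
  have : Finite (AddCommGroup.torsion (congruentCurve n).Point) :=
    Nat.finite_of_card_ne_zero (by rw [hcard]; norm_num)
  have : Nontrivial (AddCommGroup.torsion (congruentCurve n).Point) :=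
    Finite.one_lt_card_iff_nontrivial.mp (by rw [hcard]; norm_num)
  refine ⟨hcard, (AddMonoid.exponent_eq_prime_iff Nat.prime_two).mpr fun P hP => ?_⟩
  exact addOrderOf_eq_prime (Subtype.ext ((mem_torsion_iff_two_nsmul_eq_zero hn _).mp P.2)) hP

end congruentCurve

theorem torsion_congruent_curve_general (n : ℕ) (hsf : Squarefree n) :
    (∀ P : (congruentCurve n).Point,
      P ∈ AddCommGroup.torsion (congruentCurve n).Point ↔
        (P = 0 ∨ ∃ (x : ℚ) (h : (congruentCurve n).Nonsingular x 0),
          P = WeierstrassCurve.Affine.Point.some _ _ h ∧ (x = 0 ∨ x = n ∨ x = -(n : ℚ)))) ∧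
    Nonempty ((AddCommGroup.torsion (congruentCurve n).Point) ≃+ (ZMod 2 × ZMod 2)) := by
  have hn : ¬ 4 ∣ n := fun h => absurd (Nat.isUnit_iff.mp (hsf 2 h)) (by norm_num)
  have := congruentCurve.isAddKleinFour_torsion hn
  exact ⟨fun P => (congruentCurve.mem_torsion_iff_two_nsmul_eq_zero hn P).trans
    (congruentCurve.two_nsmul_eq_zero_iff P), IsAddKleinFour.nonempty_addEquiv⟩

/-- For squarefree positive `n`, the torsion subgroup of `E_n(ℚ)` for
`E_n : y² = x³ − n²x` consists exactly of the point at infinity `0` and the three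
two-torsion points `(0, 0)`, `(n, 0)` and `(−n, 0)`, and is isomorphic to
`ℤ/2ℤ ⊕ ℤ/2ℤ`. -/
theorem torsion_congruent_curve (n : ℕ) (hn : 0 < n) (hsf : Squarefree n) :
    (∀ P : (congruentCurve n).Point,
      P ∈ AddCommGroup.torsion (congruentCurve n).Point ↔
        (P = 0 ∨ ∃ (x : ℚ) (h : (congruentCurve n).Nonsingular x 0),
          P = WeierstrassCurve.Affine.Point.some _ _ h ∧ (x = 0 ∨ x = n ∨ x = -(n : ℚ)))) ∧
    Nonempty ((AddCommGroup.torsion (congruentCurve n).Point) ≃+ (ZMod 2 × ZMod 2)) :=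
  torsion_congruent_curve_general n hsf
end

section
/- Let n be a squarefree positive integer. Then n is a congruent number if and only if the elliptic curve E_n : y² = x³ − n²x has a rational point (x, y) ∈ ℚ × ℚ with y ≠ 0. -/
/-!
Right triangles of area `n` and points of `y² = x³ − n²x` off the `x`-axis correspond through
`(a, b, c) ↦ (n(a + c)/b, 2n²(a + c)/b²)`, with inverse
`(x, y) ↦ ((x² − n²)/y, 2nx/y, (x² + n²)/y)`.
-/

section

variable {K : Type*} [Field K] [NeZero (2 : K)]

theorem exists_point_of_right_triangle {n a b c : K} (hn : n ≠ 0)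
    (hpyth : a ^ 2 + b ^ 2 = c ^ 2) (harea : 1 / 2 * a * b = n) :
    ∃ x y : K, y ^ 2 = x ^ 3 - n ^ 2 * x ∧ y ≠ 0 := by
  have hab : a * b = 2 * n := by
    field_simp at harea
    linear_combination harea
  have hb : b ≠ 0 := by
    rintro rfl
    exact hn (by simpa using harea.symm)
  have hac : a + c ≠ 0 := by
    intro h
    have hb2 : b ^ 2 = 0 := by linear_combination hpyth + (c - a) * h
    exact hb (pow_eq_zero_iff two_ne_zero |>.mp hb2)
  refine ⟨n * (a + c) / b, 2 * n ^ 2 * (a + c) / b ^ 2, ?_, ?_⟩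
  · field_simp
    linear_combination b * hpyth + (-2 * (a + c)) * hab
  · exact div_ne_zero (by simp [hn, hac, two_ne_zero]) (pow_ne_zero 2 hb)

theorem exists_right_triangle_of_point {n x y : K}
    (hcurve : y ^ 2 = x ^ 3 - n ^ 2 * x) (hy : y ≠ 0) :
    ∃ a b c : K, a ^ 2 + b ^ 2 = c ^ 2 ∧ 1 / 2 * a * b = n := by
  refine ⟨(x ^ 2 - n ^ 2) / y, 2 * n * x / y, (x ^ 2 + n ^ 2) / y, ?_, ?_⟩
  · field_simp
    ring
  · field_simp
    linear_combination -n * hcurve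

end

theorem congruent_iff_nontrivial_point_general (n : ℕ) (hn : 0 < n) :
    (∃ a b c : ℚ, a ^ 2 + b ^ 2 = c ^ 2 ∧ (1 / 2) * a * b = n) ↔
      ∃ x y : ℚ, y ^ 2 = x ^ 3 - (n : ℚ) ^ 2 * x ∧ y ≠ 0 := by
  constructor
  · rintro ⟨a, b, c, hpyth, harea⟩
    exact exists_point_of_right_triangle (by exact_mod_cast hn.ne') hpyth harea
  · rintro ⟨x, y, hcurve, hy⟩
    exact exists_right_triangle_of_point hcurve hy

/-- A squarefree positive integer `n` is a congruent number (i.e. there are rationals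
`a, b, c` with `a² + b² = c²` and `(1/2)ab = n`) if and only if the elliptic curve
`E_n : y² = x³ − n²x` has a rational point with `y ≠ 0`. -/
theorem congruent_iff_nontrivial_point (n : ℕ) (hn : 0 < n) (hsf : Squarefree n) :
    (∃ a b c : ℚ, a ^ 2 + b ^ 2 = c ^ 2 ∧ (1 / 2) * a * b = n) ↔
      ∃ x y : ℚ, y ^ 2 = x ^ 3 - (n : ℚ) ^ 2 * x ∧ y ≠ 0 :=
  congruent_iff_nontrivial_point_general n hn
end

section
/- The group E_5(ℚ) of rational points of the elliptic curve y² = x³ − 25x is infinite; equivalently, E_5(ℚ) contains a point of infinite order. -/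
/-- The elliptic curve `E_5 : y² = x³ − 25x` as an affine Weierstrass curve over `ℚ`. -/
def E5 : WeierstrassCurve.Affine ℚ :=
  { a₁ := 0, a₂ := 0, a₃ := 0, a₄ := -25, a₆ := 0 }

/-!
On `y² = x³ + a₄x + a₆` with `|a₄|₂, |a₆|₂ ≤ 1`, doubling multiplies the `2`-adic absolute value of
the `x`-coordinate by `4` once it exceeds `1`: then `|y|₂² = |x|₂³`, the tangent slope `λ` has
`|λ|₂² = 4|x|₂`, and `λ²` dominates `2x` in `x(2P) = λ² - 2x`. Hence the points `2ᵏQ` are pairwise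
distinct as soon as `|x(Q)|₂ > 1`. On `E₅` the double `Q = (1681/144, -62279/1728)` of `(-4, 6)`
has `|x(Q)|₂ = 16`.
-/

open WeierstrassCurve Affine IsAbsoluteValue

local notation "‖" q "‖₂" => padicNorm 2 q

lemma padicNorm_add_eq_left_of_lt {p : ℕ} [Fact p.Prime] {q r : ℚ}
    (h : padicNorm p r < padicNorm p q) : padicNorm p (q + r) = padicNorm p q := by
  rw [padicNorm.add_eq_max_of_ne h.ne', max_eq_left h.le]

lemma padicNorm_pow {p : ℕ} [Fact p.Prime] (q : ℚ) (n : ℕ) :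
    padicNorm p (q ^ n) = padicNorm p q ^ n :=
  abv_pow (padicNorm p) q n

lemma padicNorm_two_two : ‖(2 : ℚ)‖₂ = 1 / 2 := by
  simpa using padicNorm.padicNorm_p_of_prime (p := 2)

lemma padicNorm_two_three : ‖(3 : ℚ)‖₂ = 1 := by
  exact_mod_cast (padicNorm.nat_eq_one_iff (p := 2) 3).mpr (by norm_num)

namespace WeierstrassCurve.Affine

variable {W : Affine ℚ} [W.IsShortNF] {x y : ℚ}

lemma padicNorm_two_Y_sq (ha₄ : ‖W.a₄‖₂ ≤ 1) (ha₆ : ‖W.a₆‖₂ ≤ 1) (h : W.Equation x y)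
    (hx : 1 < ‖x‖₂) : ‖y‖₂ ^ 2 = ‖x‖₂ ^ 3 := by
  have hy : y ^ 2 = x ^ 3 + (W.a₄ * x + W.a₆) := by
    rw [equation_iff, W.a₁_of_isShortNF, W.a₂_of_isShortNF, W.a₃_of_isShortNF] at h
    linear_combination h
  have hlow : ‖W.a₄ * x + W.a₆‖₂ < ‖x ^ 3‖₂ :=
    calc ‖W.a₄ * x + W.a₆‖₂ ≤ max (‖W.a₄‖₂ * ‖x‖₂) ‖W.a₆‖₂ := by
          rw [← padicNorm.mul]; exact padicNorm.nonarchimedean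
      _ ≤ ‖x‖₂ := max_le (mul_le_of_le_one_left (padicNorm.nonneg _) ha₄) (by linarith)
      _ < ‖x ^ 3‖₂ := by rw [padicNorm_pow]; exact lt_self_pow₀ hx (by norm_num)
  rw [← padicNorm_pow, hy, padicNorm_add_eq_left_of_lt hlow, padicNorm_pow]

lemma padicNorm_two_addX_self (ha₄ : ‖W.a₄‖₂ ≤ 1) (ha₆ : ‖W.a₆‖₂ ≤ 1) (h : W.Equation x y)
    (hx : 1 < ‖x‖₂) :
    y ≠ W.negY x y ∧ ‖W.addX x x (W.slope x x y y)‖₂ = 4 * ‖x‖₂ := by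
  have hy := padicNorm_two_Y_sq ha₄ ha₆ h hx
  have hy0 : y ≠ 0 := by
    rintro rfl
    rw [padicNorm.zero, zero_pow two_ne_zero] at hy
    exact (pow_pos (by linarith) 3).ne hy
  have hnegY : W.negY x y = -y := by simp
  have hne : y ≠ W.negY x y := by
    rw [hnegY]; intro h; exact hy0 (by linarith)
  refine ⟨hne, ?_⟩
  have hnum : ‖3 * x ^ 2 + W.a₄‖₂ = ‖x‖₂ ^ 2 := by
    have h3x : ‖3 * x ^ 2‖₂ = ‖x‖₂ ^ 2 := by
      rw [padicNorm.mul, padicNorm_pow, padicNorm_two_three, one_mul]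
    rw [padicNorm_add_eq_left_of_lt (by nlinarith), h3x]
  have hslope : ‖W.slope x x y y ^ 2‖₂ = 4 * ‖x‖₂ := by
    rw [slope_of_Y_ne rfl hne, hnegY, W.a₁_of_isShortNF, W.a₂_of_isShortNF,
      show 3 * x ^ 2 + 2 * 0 * x + W.a₄ - 0 * y = 3 * x ^ 2 + W.a₄ by ring, sub_neg_eq_add,
      ← two_mul, padicNorm_pow, padicNorm.div, padicNorm.mul, padicNorm_two_two, hnum, div_pow,
      mul_pow, hy]
    have : ‖x‖₂ ≠ 0 := by positivity
    field_simp
    ring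
  have h2x : ‖-(2 * x)‖₂ < ‖W.slope x x y y ^ 2‖₂ := by
    rw [hslope, padicNorm.neg, padicNorm.mul, padicNorm_two_two]
    linarith
  rw [addX, W.a₁_of_isShortNF, W.a₂_of_isShortNF,
    show W.slope x x y y ^ 2 + 0 * W.slope x x y y - 0 - x - x = W.slope x x y y ^ 2 + -(2 * x) by
      ring, padicNorm_add_eq_left_of_lt h2x, hslope]

/-- The point at infinity gets the junk value `0`, so `1 < P.twoAdicNormX` forces `P` to be
affine. -/
noncomputable def Point.twoAdicNormX : W.Point → ℚ
  | .zero => 0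
  | .some x _ _ => ‖x‖₂

lemma Point.twoAdicNormX_add_self (ha₄ : ‖W.a₄‖₂ ≤ 1) (ha₆ : ‖W.a₆‖₂ ≤ 1) {P : W.Point}
    (hP : 1 < P.twoAdicNormX) : (P + P).twoAdicNormX = 4 * P.twoAdicNormX := by
  cases P with
  | zero => exact absurd hP (by simp [twoAdicNormX])
  | some x y h =>
    obtain ⟨hne, hx⟩ := padicNorm_two_addX_self ha₄ ha₆ h.1 hP
    rw [Point.add_self_of_Y_ne hne]
    exact hx

lemma Point.twoAdicNormX_two_pow_nsmul (ha₄ : ‖W.a₄‖₂ ≤ 1) (ha₆ : ‖W.a₆‖₂ ≤ 1) {P : W.Point}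
    (hP : 1 < P.twoAdicNormX) (k : ℕ) : (2 ^ k • P).twoAdicNormX = 4 ^ k * P.twoAdicNormX := by
  induction k with
  | zero => simp
  | succ k ih =>
    have hk : 1 < (2 ^ k • P).twoAdicNormX := by
      rw [ih]; exact one_lt_mul_of_le_of_lt (one_le_pow₀ (by norm_num)) hP
    rw [pow_succ, mul_nsmul, two_nsmul, twoAdicNormX_add_self ha₄ ha₆ hk, ih]
    ring

lemma Point.not_isOfFinAddOrder_of_one_lt_twoAdicNormX (ha₄ : ‖W.a₄‖₂ ≤ 1)
    (ha₆ : ‖W.a₆‖₂ ≤ 1) {P : W.Point} (hP : 1 < P.twoAdicNormX) : ¬IsOfFinAddOrder P := by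
  have hinj : Function.Injective fun k : ℕ => 2 ^ k • P := by
    intro k l hkl
    have := congrArg twoAdicNormX hkl
    simp only [twoAdicNormX_two_pow_nsmul ha₄ ha₆ hP] at this
    exact pow_right_injective₀ (by norm_num) (by norm_num)
      (mul_right_cancel₀ (by linarith) this)
  refine infinite_multiples.mp ((Set.infinite_range_of_injective hinj).mono ?_)
  rintro _ ⟨k, rfl⟩
  exact ⟨2 ^ k, rfl⟩

end WeierstrassCurve.Affine

instance : E5.IsShortNF := ⟨rfl, rfl, rfl⟩

lemma E5_nonsingular : E5.Nonsingular (1681 / 144) (-62279 / 1728) := by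
  rw [nonsingular_iff, equation_iff]
  simp only [E5]
  norm_num

lemma E5_twoAdicNormX : (Point.some _ _ E5_nonsingular).twoAdicNormX = 16 := by
  rw [Point.twoAdicNormX, padicNorm.div, show (144 : ℚ) = 2 ^ 4 * (9 : ℕ) by norm_num,
    padicNorm.mul, padicNorm_pow, padicNorm_two_two, show (1681 : ℚ) = (1681 : ℕ) by norm_num,
    (padicNorm.nat_eq_one_iff 1681).2 (by norm_num), (padicNorm.nat_eq_one_iff 9).2 (by norm_num)]
  norm_num

/-- The group `E_5(ℚ)` of rational points of `y² = x³ − 25x` is infinite; equivalently it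
contains a point of infinite order. -/
theorem E5_points_infinite :
    Infinite E5.Point ∧ ∃ P : E5.Point, ¬ IsOfFinAddOrder P := by
  have ha₄ : ‖E5.a₄‖₂ ≤ 1 := by simpa [E5] using padicNorm.of_int (p := 2) (-25)
  have ha₆ : ‖E5.a₆‖₂ ≤ 1 := by simp [E5]
  have hQ := Point.not_isOfFinAddOrder_of_one_lt_twoAdicNormX ha₄ ha₆
    (E5_twoAdicNormX ▸ by norm_num : 1 < (Point.some _ _ E5_nonsingular).twoAdicNormX)
  exact ⟨not_finite_iff_infinite.mp fun _ => hQ (isOfFinAddOrder_of_finite _), _, hQ⟩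
end

section
/- The group E_13(ℚ) of rational points of the elliptic curve y² = x³ − 169x is infinite; equivalently, E_13(ℚ) contains a point of infinite order. -/
/-- The elliptic curve `E_13 : y² = x³ − 169x` as an affine Weierstrass curve over `ℚ`. -/
def E13 : WeierstrassCurve.Affine ℚ :=
  { a₁ := 0, a₂ := 0, a₃ := 0, a₄ := -169, a₆ := 0 }

/-!
On `y² = x³ + a x` the doubling formula reads `x(2P) = ((x² - a) / 2y)²`. If `a` is a `p`-adic
integer and `v_p(x(P)) < 0`, then `v_p(x² - a) = 2 v_p(x)` and `v_p(y²) = 3 v_p(x)`, so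
`v_p(x(2P)) = v_p(x(P)) - 2 v_p(2)`. For `p = 2` the valuation drops by `2` at each doubling, so
starting from a point of `E_13` with `v₂(x) = -4` the points `2ᵏ P` are pairwise distinct.
-/

open WeierstrassCurve.Affine Function

section Doubling

variable {F : Type*} [Field F]

def j1728Model (a : F) : WeierstrassCurve.Affine F :=
  { a₁ := 0, a₂ := 0, a₃ := 0, a₄ := a, a₆ := 0 }

variable {a x y : F}

lemma j1728Model_equation_iff : (j1728Model a).Equation x y ↔ y ^ 2 = x ^ 3 + a * x := by
  simp only [equation_iff, j1728Model]
  constructor <;> intro h <;> linear_combination h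

lemma j1728Model_nonsingular (h : y ^ 2 = x ^ 3 + a * x) (hy : 2 * y ≠ 0) :
    (j1728Model a).Nonsingular x y := by
  refine (nonsingular_iff x y).2 ⟨j1728Model_equation_iff.2 h, Or.inr ?_⟩
  simpa [j1728Model, two_mul, eq_neg_iff_add_eq_zero] using hy

variable [DecidableEq F] in
lemma j1728Model_two_nsmul_some (h : (j1728Model a).Nonsingular x y) (hy : 2 * y ≠ 0) :
    ∃ (y' : F) (h' : (j1728Model a).Nonsingular (((x ^ 2 - a) / (2 * y)) ^ 2) y'),
      2 • Point.some x y h = Point.some _ _ h' := by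
  have hneg : y ≠ (j1728Model a).negY x y := by
    simp only [negY, j1728Model]
    intro h'
    exact hy (by linear_combination h')
  have hX : (j1728Model a).addX x x ((j1728Model a).slope x x y y) =
      ((x ^ 2 - a) / (2 * y)) ^ 2 := by
    rw [slope_of_Y_ne rfl hneg]
    simp only [addX, negY, j1728Model, zero_mul, mul_zero, add_zero, sub_zero, sub_neg_eq_add,
      ← two_mul]
    have h2 : (2 : F) ≠ 0 := left_ne_zero_of_mul hy
    have hy0 : y ≠ 0 := right_ne_zero_of_mul hy
    field_simp
    linear_combination (-8 * x) * j1728Model_equation_iff.1 h.1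
  rw [two_smul, Point.add_self_of_Y_ne hneg]
  exact ⟨_, hX ▸ nonsingular_add h h fun hxy => hneg hxy.2, by congr 1⟩

end Doubling

section Valuation

variable {p : ℕ}

lemma padicValRat_natCast_eq_zero {n : ℕ} (h : ¬p ∣ n) : padicValRat p n = 0 := by
  simp [padicValRat.of_nat, padicValNat.eq_zero_of_not_dvd h]

lemma add_ne_zero_of_padicValRat_lt {q r : ℚ} (h : padicValRat p q < padicValRat p r) :
    q + r ≠ 0 := by
  intro hqr
  rw [eq_neg_of_add_eq_zero_right hqr, padicValRat.neg] at h
  exact h.false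

lemma padicValRat_two_two : padicValRat 2 2 = 1 := by
  simpa using padicValRat.self (p := 2) one_lt_two

variable [Fact p.Prime]

lemma padicValRat_j1728Model_doubleX {a x y : ℚ} (ha0 : a ≠ 0) (ha : 0 ≤ padicValRat p a)
    (hxy : y ^ 2 = x ^ 3 + a * x) (hx : padicValRat p x < 0) :
    2 * y ≠ 0 ∧
      padicValRat p (((x ^ 2 - a) / (2 * y)) ^ 2) = padicValRat p x - 2 * padicValRat p 2 := by
  have hx0 : x ≠ 0 := by
    rintro rfl
    simp at hx
  have hx2 : padicValRat p (x ^ 2) < padicValRat p (-a) := by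
    rw [padicValRat.pow, padicValRat.neg]; push_cast; linarith
  have hx3 : padicValRat p (x ^ 3) < padicValRat p (a * x) := by
    rw [padicValRat.pow, padicValRat.mul ha0 hx0]; push_cast; linarith
  have hnum0 : x ^ 2 - a ≠ 0 := sub_eq_add_neg (x ^ 2) a ▸ add_ne_zero_of_padicValRat_lt hx2
  have hnum : padicValRat p (x ^ 2 - a) = 2 * padicValRat p x := by
    rw [sub_eq_add_neg, padicValRat.add_eq_of_lt (add_ne_zero_of_padicValRat_lt hx2)
      (pow_ne_zero 2 hx0) (neg_ne_zero.2 ha0) hx2, padicValRat.pow]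
    push_cast; ring
  have hy0 : y ≠ 0 := by
    rintro rfl
    exact add_ne_zero_of_padicValRat_lt hx3 (by simpa using hxy.symm)
  have hden : 2 * padicValRat p y = 3 * padicValRat p x := by
    have h := padicValRat.add_eq_of_lt (add_ne_zero_of_padicValRat_lt hx3) (pow_ne_zero 3 hx0)
      (mul_ne_zero ha0 hx0) hx3
    rw [← hxy, padicValRat.pow, padicValRat.pow] at h
    exact_mod_cast h
  refine ⟨mul_ne_zero two_ne_zero hy0, ?_⟩
  rw [padicValRat.pow, padicValRat.div hnum0 (mul_ne_zero two_ne_zero hy0),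
    padicValRat.mul two_ne_zero hy0, hnum]
  push_cast; linarith

end Valuation

/-- The point at infinity gets the junk value `0`; only points with negative value matter. -/
def padicValX (p : ℕ) {W : WeierstrassCurve.Affine ℚ} : W.Point → ℤ
  | 0 => 0
  | .some x _ _ => padicValRat p x

@[simp]
lemma padicValX_some {p : ℕ} {W : WeierstrassCurve.Affine ℚ} {x y : ℚ} (h : W.Nonsingular x y) :
    padicValX p (.some x y h) = padicValRat p x :=
  rfl

section Point

variable {a : ℚ} {P : (j1728Model a).Point}

lemma padicValX_two_nsmul {p : ℕ} [Fact p.Prime] (ha0 : a ≠ 0) (ha : 0 ≤ padicValRat p a)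
    (hP : padicValX p P < 0) : padicValX p (2 • P) = padicValX p P - 2 * padicValRat p 2 := by
  rcases P with _ | ⟨x, y, h⟩
  · exact absurd hP (lt_irrefl 0)
  obtain ⟨hy, hval⟩ := padicValRat_j1728Model_doubleX ha0 ha (j1728Model_equation_iff.1 h.1) hP
  obtain ⟨y', h', h2P⟩ := j1728Model_two_nsmul_some h hy
  rwa [h2P, padicValX_some]

lemma padicValX_two_pow_nsmul (ha0 : a ≠ 0) (ha : 0 ≤ padicValRat 2 a)
    (hP : padicValX 2 P < 0) (k : ℕ) : padicValX 2 (2 ^ k • P) = padicValX 2 P - 2 * k := by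
  induction k with
  | zero => simp
  | succ k ih =>
    rw [pow_succ', mul_smul, padicValX_two_nsmul ha0 ha (by omega), ih, padicValRat_two_two]
    push_cast; ring

lemma injective_two_pow_nsmul (ha0 : a ≠ 0) (ha : 0 ≤ padicValRat 2 a)
    (hP : padicValX 2 P < 0) : Injective fun k : ℕ => 2 ^ k • P := by
  intro j k hjk
  have h := congrArg (padicValX 2) hjk
  simp only [padicValX_two_pow_nsmul ha0 ha hP] at h
  omega

end Point

lemma not_isOfFinAddOrder_of_injective_comp_nsmul {G : Type*} [AddMonoid G] {P : G} {f : ℕ → ℕ}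
    (hf : Injective fun k => f k • P) : ¬IsOfFinAddOrder P := fun hP =>
  Set.infinite_range_of_injective hf <| hP.finite_multiples.subset <|
    Set.range_subset_iff.2 fun k => ⟨f k, rfl⟩

lemma E13_eq : E13 = j1728Model (-169) := rfl

/-- `x = (c/2)²` for the right triangle with sides `780/323`, `323/30`, `c = 106921/9690` and
area `13`. -/
def P₀ : (j1728Model (-169 : ℚ)).Point :=
  .some (11432100241 / 375584400) (1105240264347961 / 7278825672000)
    (j1728Model_nonsingular (by norm_num) (by norm_num))

lemma padicValX_P₀ : padicValX 2 P₀ = -4 := by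
  have hodd {n : ℕ} (hn : ¬2 ∣ n) : padicValRat 2 (n : ℚ) = 0 := padicValRat_natCast_eq_zero hn
  rw [P₀, padicValX_some, show (375584400 : ℚ) = 2 ^ 4 * (23474025 : ℕ) by norm_num,
    padicValRat.div (by norm_num) (by norm_num), padicValRat.mul (by norm_num) (by norm_num),
    padicValRat.pow, padicValRat_two_two, show (11432100241 : ℚ) = (11432100241 : ℕ) by norm_num,
    hodd (by norm_num), hodd (by norm_num)]
  norm_num

/-- The group `E_13(ℚ)` of rational points of `y² = x³ − 169x` is infinite; equivalently it
contains a point of infinite order. -/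
theorem E13_points_infinite :
    Infinite E13.Point ∧ ∃ P : E13.Point, ¬ IsOfFinAddOrder P := by
  rw [E13_eq]
  have hinj : Injective fun k : ℕ => 2 ^ k • P₀ :=
    injective_two_pow_nsmul (by norm_num)
      (by simpa using (padicValRat_natCast_eq_zero (p := 2) (n := 169) (by norm_num)).ge)
      (by rw [padicValX_P₀]; norm_num)
  exact ⟨Infinite.of_injective _ hinj, P₀, not_isOfFinAddOrder_of_injective_comp_nsmul hinj⟩
end

section
/- Let K be a field of characteristic different from 2 and 3, and let E be the elliptic curve over K given by y² = (x − α)(x − β)(x − γ), where α, β, γ ∈ K are pairwise distinct. For a point P = (x₂, y₂) in E(K), there exists a point Q = (x₁, y₁) in E(K) with 2Q = P (doubling taken in the elliptic curve group law) if and only if all three elements x₂ − α, x₂ − β, and x₂ − γ are squares in K. -/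
/-!
If `2Q = P` with `Q = (x₁, y₁)`, then `y₁ ≠ 0`, and the tangent slope `ℓ = f'(x₁) / (2y₁)` of
`y² = f(x) = (x - α)(x - β)(x - γ)` gives `x₂ = ℓ² + α + β + γ - 2x₁`, whence
`(x₂ - α)(2y₁)² = ((x₁ - α)² - (α - β)(α - γ))²`; the curve is symmetric in its roots, so the same
holds for `β` and `γ`. Conversely, if `x₂ - α = a²`, `x₂ - β = b²` and `x₂ - γ = c²`, then
`y₂² = (abc)²`, so after changing the sign of `a` we have `y₂ = abc`. The point
`(x₂ + ab + ac + bc, (a + b)(a + c)(b + c))` then lies on the curve, has tangent slope `a + b + c`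
and doubles to `P`; it is not `2`-torsion since `a + b`, `a + c`, `b + c` are nonzero, the roots
being distinct.
-/

section

open WeierstrassCurve WeierstrassCurve.Affine

namespace WeierstrassCurve.Affine

variable {F : Type*} [Field F] [DecidableEq F] {W : Affine F}

lemma Point.exists_of_two_nsmul_eq_some {Q : W.Point} {x y : F} {h : W.Nonsingular x y}
    (hQ : 2 • Q = .some _ _ h) :
    ∃ x₁ y₁, W.Equation x₁ y₁ ∧ y₁ ≠ W.negY x₁ y₁ ∧
      x = W.addX x₁ x₁ (W.slope x₁ x₁ y₁ y₁) := by
  rw [two_nsmul] at hQ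
  rcases Q with _ | @⟨x₁, y₁, h₁⟩
  · exact absurd hQ.symm (Point.some_ne_zero h)
  · by_cases hy : y₁ = W.negY x₁ y₁
    · rw [Point.add_self_of_Y_eq hy] at hQ
      exact absurd hQ.symm (Point.some_ne_zero h)
    · rw [Point.add_self_of_Y_ne hy, Point.some.injEq] at hQ
      exact ⟨x₁, y₁, h₁.1, hy, hQ.1.symm⟩

lemma Point.two_nsmul_some_of_Y_ne {x₁ y₁ x y : F} {h₁ : W.Nonsingular x₁ y₁}
    {h : W.Nonsingular x y} (hy₁ : y₁ ≠ W.negY x₁ y₁)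
    (hx : W.addX x₁ x₁ (W.slope x₁ x₁ y₁ y₁) = x)
    (hy : W.addY x₁ x₁ y₁ (W.slope x₁ x₁ y₁ y₁) = y) :
    2 • Point.some _ _ h₁ = .some _ _ h := by
  rw [two_nsmul, Point.add_self_of_Y_ne hy₁, Point.some.injEq]
  exact ⟨hx, hy⟩

end WeierstrassCurve.Affine

variable {K : Type*} [Field K] {α β γ x y : K}

def WeierstrassCurve.Affine.ofRoots (α β γ : K) : Affine K :=
  { a₁ := 0, a₂ := -(α + β + γ), a₃ := 0, a₄ := α * β + α * γ + β * γ, a₆ := -(α * β * γ) }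

namespace WeierstrassCurve.Affine

lemma ofRoots_swap₁₂ (α β γ : K) : ofRoots α β γ = ofRoots β α γ := by
  unfold ofRoots
  congr 1 <;> ring

lemma ofRoots_swap₁₃ (α β γ : K) : ofRoots α β γ = ofRoots γ β α := by
  unfold ofRoots
  congr 1 <;> ring

lemma equation_ofRoots_iff :
    (ofRoots α β γ).Equation x y ↔ y ^ 2 = (x - α) * (x - β) * (x - γ) := by
  rw [equation_iff]
  simp only [ofRoots]
  constructor <;> intro h <;> linear_combination h

lemma Δ_ofRoots (α β γ : K) :
    (ofRoots α β γ).Δ = 16 * ((α - β) * (α - γ) * (β - γ)) ^ 2 := by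
  simp only [ofRoots, Δ, b₂, b₄, b₆, b₈]
  ring

lemma nonsingular_ofRoots_of_equation (h2 : (2 : K) ≠ 0) (hαβ : α ≠ β) (hαγ : α ≠ γ)
    (hβγ : β ≠ γ) (h : (ofRoots α β γ).Equation x y) : (ofRoots α β γ).Nonsingular x y := by
  refine (equation_iff_nonsingular_of_Δ_ne_zero ?_).mp h
  rw [Δ_ofRoots, show (16 : K) = 2 ^ 4 by norm_num]
  have := sub_ne_zero.mpr hαβ
  have := sub_ne_zero.mpr hαγ
  have := sub_ne_zero.mpr hβγ
  positivity

lemma negY_ofRoots : (ofRoots α β γ).negY x y = -y := by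
  simp [ofRoots, negY]

lemma ne_negY_ofRoots_iff (h2 : (2 : K) ≠ 0) : y ≠ (ofRoots α β γ).negY x y ↔ y ≠ 0 := by
  rw [negY_ofRoots, not_iff_not, eq_neg_iff_add_eq_zero, ← two_mul, mul_eq_zero,
    or_iff_right h2]

lemma addX_ofRoots (ℓ : K) : (ofRoots α β γ).addX x x ℓ = ℓ ^ 2 + (α + β + γ) - 2 * x := by
  simp only [ofRoots, addX]
  ring

variable [DecidableEq K]

lemma slope_ofRoots_self (h2 : (2 : K) ≠ 0) (hy : y ≠ 0) :
    (ofRoots α β γ).slope x x y y =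
      ((x - α) * (x - β) + (x - α) * (x - γ) + (x - β) * (x - γ)) / (2 * y) := by
  rw [slope_of_Y_ne rfl ((ne_negY_ofRoots_iff h2).mpr hy), negY_ofRoots]
  simp only [ofRoots]
  congr 1 <;> ring

lemma isSquare_addX_slope_ofRoots_sub (h2 : (2 : K) ≠ 0) (h : (ofRoots α β γ).Equation x y)
    (hy : y ≠ 0) :
    IsSquare ((ofRoots α β γ).addX x x ((ofRoots α β γ).slope x x y y) - α) := by
  rw [equation_ofRoots_iff] at h
  refine ⟨((x - α) ^ 2 - (α - β) * (α - γ)) / (2 * y), ?_⟩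
  rw [addX_ofRoots, slope_ofRoots_self h2 hy]
  field_simp
  linear_combination (4 * (β + γ - 2 * x)) * h

lemma isSquare_sub_of_two_nsmul_eq (h2 : (2 : K) ≠ 0) {Q : (ofRoots α β γ).Point}
    {h : (ofRoots α β γ).Nonsingular x y} (hQ : 2 • Q = .some _ _ h) :
    IsSquare (x - α) ∧ IsSquare (x - β) ∧ IsSquare (x - γ) := by
  obtain ⟨x₁, y₁, h₁, hy₁, rfl⟩ := Point.exists_of_two_nsmul_eq_some hQ
  rw [ne_negY_ofRoots_iff h2] at hy₁
  refine ⟨isSquare_addX_slope_ofRoots_sub h2 h₁ hy₁, ?_, ?_⟩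
  · rw [ofRoots_swap₁₂] at h₁ ⊢
    exact isSquare_addX_slope_ofRoots_sub h2 h₁ hy₁
  · rw [ofRoots_swap₁₃] at h₁ ⊢
    exact isSquare_addX_slope_ofRoots_sub h2 h₁ hy₁

lemma exists_two_nsmul_eq_of_eq_mul_self (h2 : (2 : K) ≠ 0) (hαβ : α ≠ β) (hαγ : α ≠ γ)
    (hβγ : β ≠ γ) {a b c : K} (ha : x - α = a * a) (hb : x - β = b * b) (hc : x - γ = c * c)
    (hy : y = a * b * c) {h : (ofRoots α β γ).Nonsingular x y} :
    ∃ Q : (ofRoots α β γ).Point, 2 • Q = .some _ _ h := by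
  obtain rfl : α = x - a * a := by linear_combination -ha
  obtain rfl : β = x - b * b := by linear_combination -hb
  obtain rfl : γ = x - c * c := by linear_combination -hc
  subst hy
  have hab : a + b ≠ 0 := fun h0 ↦ hαβ (by linear_combination (b - a) * h0)
  have hac : a + c ≠ 0 := fun h0 ↦ hαγ (by linear_combination (c - a) * h0)
  have hbc : b + c ≠ 0 := fun h0 ↦ hβγ (by linear_combination (c - b) * h0)
  have hy₁ : (a + b) * (a + c) * (b + c) ≠ 0 := mul_ne_zero (mul_ne_zero hab hac) hbc
  have h₁ : (ofRoots (x - a * a) (x - b * b) (x - c * c)).Nonsingular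
      (x + a * b + a * c + b * c) ((a + b) * (a + c) * (b + c)) :=
    nonsingular_ofRoots_of_equation h2 hαβ hαγ hβγ (equation_ofRoots_iff.mpr (by ring))
  have hslope : (ofRoots (x - a * a) (x - b * b) (x - c * c)).slope
      (x + a * b + a * c + b * c) (x + a * b + a * c + b * c)
      ((a + b) * (a + c) * (b + c)) ((a + b) * (a + c) * (b + c)) = a + b + c := by
    rw [slope_ofRoots_self h2 hy₁, div_eq_iff (mul_ne_zero h2 hy₁)]
    ring
  refine ⟨.some _ _ h₁, Point.two_nsmul_some_of_Y_ne ((ne_negY_ofRoots_iff h2).mpr hy₁) ?_ ?_⟩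
  · rw [hslope, addX_ofRoots]
    ring
  · rw [addY, hslope, negY_ofRoots, negAddY, addX_ofRoots]
    ring

lemma exists_two_nsmul_eq_of_isSquare (h2 : (2 : K) ≠ 0) (hαβ : α ≠ β) (hαγ : α ≠ γ)
    (hβγ : β ≠ γ) {h : (ofRoots α β γ).Nonsingular x y}
    (hsq : IsSquare (x - α) ∧ IsSquare (x - β) ∧ IsSquare (x - γ)) :
    ∃ Q : (ofRoots α β γ).Point, 2 • Q = .some _ _ h := by
  obtain ⟨⟨a, ha⟩, ⟨b, hb⟩, ⟨c, hc⟩⟩ := hsq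
  have hy : (y - a * b * c) * (y + a * b * c) = 0 := by
    have hE := equation_ofRoots_iff.mp h.1
    rw [ha, hb, hc] at hE
    linear_combination hE
  rcases mul_eq_zero.mp hy with hy | hy
  · exact exists_two_nsmul_eq_of_eq_mul_self h2 hαβ hαγ hβγ ha hb hc (by linear_combination hy)
  · exact exists_two_nsmul_eq_of_eq_mul_self (a := -a) h2 hαβ hαγ hβγ (by linear_combination ha)
      hb hc (by linear_combination hy)

end WeierstrassCurve.Affine

end

open Classical in
/-- Let `K` be a field of characteristic not `2` or `3` and let `E` be the elliptic curve
`y² = (x − α)(x − β)(x − γ)` with `α, β, γ ∈ K` pairwise distinct. A point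
`P = (x₂, y₂) ∈ E(K)` is twice a point of `E(K)` if and only if `x₂ − α`, `x₂ − β` and
`x₂ − γ` are all squares in `K`. -/
theorem halving_criterion (K : Type*) [Field K] (h2 : (2 : K) ≠ 0) (h3 : (3 : K) ≠ 0)
    (α β γ : K) (hαβ : α ≠ β) (hαγ : α ≠ γ) (hβγ : β ≠ γ)
    (W : WeierstrassCurve.Affine K)
    (hW : W = { a₁ := 0, a₂ := -(α + β + γ), a₃ := 0,
                a₄ := α * β + α * γ + β * γ, a₆ := -(α * β * γ) })
    (x₂ y₂ : K) (h : W.Nonsingular x₂ y₂) :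
    (∃ Q : W.Point, 2 • Q = WeierstrassCurve.Affine.Point.some _ _ h) ↔
      (IsSquare (x₂ - α) ∧ IsSquare (x₂ - β) ∧ IsSquare (x₂ - γ)) := by
  subst hW
  exact ⟨fun ⟨_, hQ⟩ ↦ WeierstrassCurve.Affine.isSquare_sub_of_two_nsmul_eq h2 hQ,
    WeierstrassCurve.Affine.exists_two_nsmul_eq_of_isSquare h2 hαβ hαγ hβγ⟩
end
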